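/- Let q be a Q-matrix on ℕ, let (E_n) be an increasing sequence of subsets of ℕ with ⋃_n E_n = ℕ, and for each n let q⁽ⁿ⁾ be any Q-matrix on ℕ such that q⁽ⁿ⁾ i j = q i j for all i, j ∈ E_n and q⁽ⁿ⁾ i j = 0 whenever i ∉ E_n. Let P⁽ⁿ⁾ be the minimal Q-process for q⁽ⁿ⁾ and P the minimal Q-process for q. Then for every n, P⁽ⁿ⁾ t i j ≤ P⁽ⁿ⁺¹⁾ t i j for all i, j ∈ E_n and t ≥ 0, and lim_{n→∞} P⁽ⁿ⁾ t i j = P t i j for all i, j and t ≥ 0. -/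

import Mathlib

/-!
The minimal process for `q` is the increasing limit of Feller's iterates
`P⁰ = 0`, `Pᵐ⁺¹ t i j = δᵢⱼ e^{-qᵢ t} + ∫₀ᵗ e^{-qᵢ (t-s)} ∑_{k ≠ i} q i k Pᵐ s k j ds`:
the limit solves the backward equation and is a transition function (Chapman–Kolmogorov
follows by comparing both sides with the iterates), and induction on `m` puts every iterate
below any transition function solving the backward equation.

If `q⁽ⁿ⁾` agrees with `q'` on `Eₙ × Eₙ` and has zero rows off `Eₙ`, its iterates vanish from
rows off `Eₙ` into columns in `Eₙ`, so the same induction bounds them, on `Eₙ × Eₙ`, by any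
solution for `q'`. With `q' = q⁽ⁿ⁺¹⁾` this is the monotonicity, with `q' = q` the upper bound
`P⁽ⁿ⁾ ≤ P`. For fixed `m` the iterates of `q⁽ⁿ⁾` converge to those of `q` by dominated
convergence, which gives the matching lower bound.
-/

open scoped BigOperators
open Filter Topology

/-- Row `i` of `q` with the diagonal entry replaced by `0`
(used to form sums over the off-diagonal entries). -/
noncomputable def offDiag (q : ℕ → ℕ → ℝ) (i j : ℕ) : ℝ :=
  if j = i then 0 else q i j

/-- `q` is a (totally stable) Q-matrix on `ℕ`: nonnegative off-diagonal entries,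
nonpositive diagonal, and each row is summable off the diagonal with
`∑_{j ≠ i} q i j ≤ qᵢ := -q i i`. -/
def IsQMatrix (q : ℕ → ℕ → ℝ) : Prop :=
  (∀ i j, i ≠ j → 0 ≤ q i j) ∧
  (∀ i, q i i ≤ 0) ∧
  (∀ i, Summable (fun j => offDiag q i j)) ∧
  (∀ i, (∑' j, offDiag q i j) ≤ - q i i)

/-- A Q-matrix is conservative if each row sums to `0`:
`∑_{j ≠ i} q i j = qᵢ = -q i i`. -/
def IsConservative (q : ℕ → ℕ → ℝ) : Prop :=
  ∀ i, (∑' j, offDiag q i j) = - q i i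

/-- A Q-matrix is bounded if `sup_i qᵢ < ∞`. -/
def IsBoundedQ (q : ℕ → ℕ → ℝ) : Prop :=
  ∃ C : ℝ, ∀ i, - q i i ≤ C

/-- A substochastic transition function on `[0,∞)` (parametrized by `t : ℝ`,
with all conditions imposed for `t ≥ 0`). -/
def IsTransitionFunction (P : ℝ → ℕ → ℕ → ℝ) : Prop :=
  (∀ t i j, 0 ≤ t → 0 ≤ P t i j) ∧
  (∀ t i, 0 ≤ t → Summable (fun j => P t i j)) ∧
  (∀ t i, 0 ≤ t → (∑' j, P t i j) ≤ 1) ∧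
  (∀ i j, P 0 i j = if i = j then 1 else 0) ∧
  (∀ t s i j, 0 ≤ t → 0 ≤ s → P (t + s) i j = ∑' k, P t i k * P s k j)

/-- `P` satisfies the backward integral equation for the Q-matrix `q`:
`P t i j = δ_{ij} e^{-qᵢ t} + ∫_0^t e^{-qᵢ (t-s)} ∑_{k ≠ i} q i k P s k j ds`
(here `-qᵢ = q i i`). -/
def BackwardEq (q : ℕ → ℕ → ℝ) (P : ℝ → ℕ → ℕ → ℝ) : Prop :=
  ∀ t i j, 0 ≤ t →
    P t i j = (if i = j then 1 else 0) * Real.exp (q i i * t) +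
      ∫ s in (0:ℝ)..t,
        Real.exp (q i i * (t - s)) * (∑' k, if k = i then 0 else q i k * P s k j)

/-- `P` is the minimal Q-process for `q`: a substochastic transition function
satisfying the backward integral equation for `q`, which is pointwise below any
other such transition function. -/
def IsMinimalQProcess (q : ℕ → ℕ → ℝ) (P : ℝ → ℕ → ℕ → ℝ) : Prop :=
  IsTransitionFunction P ∧ BackwardEq q P ∧
  ∀ P', IsTransitionFunction P' → BackwardEq q P' →
    ∀ t i j, 0 ≤ t → P t i j ≤ P' t i j

/-- `q` is regular (`IsRegularQ` to avoid a name clash with Mathlib): conservative, and the minimal Q-process is honest (stochastic). -/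
def IsRegularQ (q : ℕ → ℕ → ℝ) : Prop :=
  IsConservative q ∧
  ∀ P, IsMinimalQProcess q P → ∀ t, 0 ≤ t → ∀ i, (∑' j, P t i j) = 1

/-- The tail sum `∑_{j ≥ k} f j`. -/
noncomputable def tailSum (f : ℕ → ℝ) (k : ℕ) : ℝ :=
  ∑' j, if k ≤ j then f j else 0

/-- Condition (1.1): stochastic comparability of `P1` and `P2`. -/
def Cond11 (P1 P2 : ℝ → ℕ → ℕ → ℝ) : Prop :=
  ∀ t, 0 ≤ t → ∀ k i m, i ≤ m → tailSum (P1 t i) k ≤ tailSum (P2 t m) k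

/-- Condition (1.2) for the Q-matrices `q1`, `q2`. -/
def Cond12 (q1 q2 : ℕ → ℕ → ℝ) : Prop :=
  ∀ i m, i ≤ m → ∀ k, (k ≤ i ∨ m + 1 ≤ k) →
    tailSum (q1 i) k ≤ tailSum (q2 m) k

/-- Condition (1.3) for the Q-matrices `q1`, `q2` (the conservative reduction
of (1.2)). -/
def Cond13 (q1 q2 : ℕ → ℕ → ℝ) : Prop :=
  ∀ i m, i ≤ m →
    (∀ k, m + 1 ≤ k → tailSum (q1 i) k ≤ tailSum (q2 m) k) ∧
    (∀ k, k + 1 ≤ i →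
      (∑ j ∈ Finset.range (k + 1), q2 m j) ≤ ∑ j ∈ Finset.range (k + 1), q1 i j)


open MeasureTheory

namespace IsQMatrix

variable {q : ℕ → ℕ → ℝ}

lemma offDiag_nonneg (hq : IsQMatrix q) (i k : ℕ) : 0 ≤ offDiag q i k := by
  unfold offDiag
  split_ifs with h
  · exact le_rfl
  · exact hq.1 i k (Ne.symm h)

lemma diag_nonpos (hq : IsQMatrix q) (i : ℕ) : q i i ≤ 0 := hq.2.1 i

lemma summable_offDiag (hq : IsQMatrix q) (i : ℕ) : Summable (offDiag q i) := hq.2.2.1 i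

lemma tsum_offDiag_le (hq : IsQMatrix q) (i : ℕ) : ∑' k, offDiag q i k ≤ -q i i := hq.2.2.2 i

end IsQMatrix

lemma measurable_of_hasSum {α : Type*} [MeasurableSpace α] {G : ℕ → α → ℝ} {g : α → ℝ}
    (hG : ∀ k, Measurable (G k)) (hg : ∀ x, HasSum (fun k => G k x) (g x)) : Measurable g :=
  measurable_of_tendsto_metrizable (fun n => Finset.measurable_sum (Finset.range n) fun k _ => hG k)
    (tendsto_pi_nhds.2 fun x => (hg x).tendsto_sum_nat)

lemma intervalIntegrable_of_abs_le {G : ℝ → ℝ} {C : ℝ} (hG : Measurable G)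
    (hGC : ∀ s, |G s| ≤ C) (u v : ℝ) : IntervalIntegrable G volume u v :=
  (intervalIntegrable_const (c := C)).mono_fun hG.aestronglyMeasurable
    (Eventually.of_forall fun s => by simpa using (hGC s).trans (le_abs_self C))

noncomputable def offDiagSum (q : ℕ → ℕ → ℝ) (i : ℕ) (f : ℕ → ℝ) : ℝ :=
  ∑' k, offDiag q i k * f k

section OffDiagSum

variable {q q' : ℕ → ℕ → ℝ} {i : ℕ} {f g : ℕ → ℝ}

lemma tsum_ite_eq_offDiagSum (q : ℕ → ℕ → ℝ) (i : ℕ) (f : ℕ → ℝ) :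
    (∑' k, if k = i then 0 else q i k * f k) = offDiagSum q i f :=
  tsum_congr fun k => by unfold offDiag; split_ifs <;> simp

lemma offDiag_mul_le (hq : IsQMatrix q) (hf₁ : f ≤ 1) (k : ℕ) :
    offDiag q i k * f k ≤ offDiag q i k :=
  mul_le_of_le_one_right (hq.offDiag_nonneg i k) (hf₁ k)

lemma summable_offDiag_mul (hq : IsQMatrix q) (hf₀ : 0 ≤ f) (hf₁ : f ≤ 1) :
    Summable fun k => offDiag q i k * f k :=
  (hq.summable_offDiag i).of_nonneg_of_le (fun k => mul_nonneg (hq.offDiag_nonneg i k) (hf₀ k))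
    (offDiag_mul_le hq hf₁)

lemma offDiagSum_nonneg (hq : IsQMatrix q) (hf₀ : 0 ≤ f) : 0 ≤ offDiagSum q i f :=
  tsum_nonneg fun k => mul_nonneg (hq.offDiag_nonneg i k) (hf₀ k)

lemma offDiagSum_le (hq : IsQMatrix q) (hf₀ : 0 ≤ f) (hf₁ : f ≤ 1) :
    offDiagSum q i f ≤ -q i i :=
  ((summable_offDiag_mul hq hf₀ hf₁).tsum_le_tsum (offDiag_mul_le hq hf₁)
    (hq.summable_offDiag i)).trans (hq.tsum_offDiag_le i)

lemma abs_offDiagSum_le (hq : IsQMatrix q) (hf₀ : 0 ≤ f) (hf₁ : f ≤ 1) :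
    |offDiagSum q i f| ≤ -q i i := by
  rw [abs_of_nonneg (offDiagSum_nonneg hq hf₀)]
  exact offDiagSum_le hq hf₀ hf₁

lemma offDiagSum_mono (hq : IsQMatrix q) (hf₀ : 0 ≤ f) (hfg : f ≤ g) (hg₁ : g ≤ 1) :
    offDiagSum q i f ≤ offDiagSum q i g :=
  (summable_offDiag_mul hq hf₀ (hfg.trans hg₁)).tsum_le_tsum
    (fun k => mul_le_mul_of_nonneg_left (hfg k) (hq.offDiag_nonneg i k))
    (summable_offDiag_mul hq (hf₀.trans hfg) hg₁)

lemma offDiagSum_congr {S : Set ℕ} (hagree : ∀ k ∈ S, q i k = q' i k) (hf : ∀ k ∉ S, f k = 0) :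
    offDiagSum q i f = offDiagSum q' i f := by
  refine tsum_congr fun k => ?_
  by_cases hk : k ∈ S
  · simp only [offDiag, hagree k hk]
  · simp [hf k hk]

lemma offDiagSum_of_row_eq_zero (hrow : ∀ k, q i k = 0) : offDiagSum q i f = 0 := by
  simp [offDiagSum, offDiag, hrow]

lemma tendsto_offDiagSum (hq : IsQMatrix q) {f : ℕ → ℕ → ℝ}
    (hlim : ∀ k, Tendsto (fun n => f n k) atTop (𝓝 (g k))) (hf₀ : ∀ n, 0 ≤ f n)
    (hf₁ : ∀ n, f n ≤ 1) :
    Tendsto (fun n => offDiagSum q i (f n)) atTop (𝓝 (offDiagSum q i g)) :=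
  tendsto_tsum_of_dominated_convergence (hq.summable_offDiag i)
    (fun k => (hlim k).const_mul _) (Eventually.of_forall fun n k => by
      rw [Real.norm_of_nonneg (mul_nonneg (hq.offDiag_nonneg i k) (hf₀ n k))]
      exact offDiag_mul_le hq (hf₁ n) k)

end OffDiagSum

structure IsSubstochastic (K : ℕ → ℕ → ℝ) : Prop where
  nonneg : ∀ i j, 0 ≤ K i j
  sum_le_one : ∀ i (s : Finset ℕ), ∑ j ∈ s, K i j ≤ 1

namespace IsSubstochastic

variable {K : ℕ → ℕ → ℝ} {c : ℕ → ℝ}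

lemma of_hasSum (h₀ : ∀ i j, 0 ≤ K i j) (h : ∀ i, ∃ r ≤ 1, HasSum (K i) r) :
    IsSubstochastic K where
  nonneg := h₀
  sum_le_one i s := by
    obtain ⟨r, hr, hK⟩ := h i
    exact (sum_le_hasSum s (fun j _ => h₀ i j) hK).trans hr

lemma summable (hK : IsSubstochastic K) (i : ℕ) : Summable (K i) :=
  summable_of_sum_le (hK.nonneg i) (hK.sum_le_one i)

lemma tsum_le_one (hK : IsSubstochastic K) (i : ℕ) : ∑' j, K i j ≤ 1 :=
  (hK.summable i).tsum_le_of_sum_le (hK.sum_le_one i)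

lemma le_one (hK : IsSubstochastic K) (i j : ℕ) : K i j ≤ 1 :=
  ((hK.summable i).le_tsum j fun k _ => hK.nonneg i k).trans (hK.tsum_le_one i)

lemma summable_mul (hK : IsSubstochastic K) (hc₀ : 0 ≤ c) (hc₁ : c ≤ 1) (i : ℕ) :
    Summable fun j => K i j * c j :=
  (hK.summable i).of_nonneg_of_le (fun j => mul_nonneg (hK.nonneg i j) (hc₀ j))
    fun j => mul_le_of_le_one_right (hK.nonneg i j) (hc₁ j)

lemma tsum_mul_nonneg (hK : IsSubstochastic K) (hc₀ : 0 ≤ c) (i : ℕ) :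
    0 ≤ ∑' j, K i j * c j :=
  tsum_nonneg fun j => mul_nonneg (hK.nonneg i j) (hc₀ j)

lemma tsum_mul_le_one (hK : IsSubstochastic K) (hc₀ : 0 ≤ c) (hc₁ : c ≤ 1) (i : ℕ) :
    ∑' j, K i j * c j ≤ 1 :=
  ((hK.summable_mul hc₀ hc₁ i).tsum_le_tsum (fun j => mul_le_of_le_one_right (hK.nonneg i j)
    (hc₁ j)) (hK.summable i)).trans (hK.tsum_le_one i)

end IsSubstochastic

lemma hasSum_offDiagSum_mul {q : ℕ → ℕ → ℝ} (hq : IsQMatrix q) {V : ℕ → ℕ → ℝ}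
    (hV : IsSubstochastic V) {c : ℕ → ℝ} (hc₀ : 0 ≤ c) (hc₁ : c ≤ 1) (i : ℕ) :
    HasSum (fun k => offDiagSum q i (fun l => V l k) * c k)
      (offDiagSum q i fun l => ∑' k, V l k * c k) := by
  have hT₀ : 0 ≤ fun p : ℕ × ℕ => offDiag q i p.1 * (V p.1 p.2 * c p.2) := fun p =>
    mul_nonneg (hq.offDiag_nonneg i _) (mul_nonneg (hV.nonneg _ _) (hc₀ _))
  have hrow : ∀ l, HasSum (fun k => offDiag q i l * (V l k * c k))
      (offDiag q i l * ∑' k, V l k * c k) := fun l =>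
    ((hV.summable_mul hc₀ hc₁ l).hasSum).mul_left _
  have hT : Summable fun p : ℕ × ℕ => offDiag q i p.1 * (V p.1 p.2 * c p.2) :=
    (summable_prod_of_nonneg hT₀).2 ⟨fun l => (hrow l).summable, by
      simpa only [(hrow _).tsum_eq] using
        summable_offDiag_mul hq (hV.tsum_mul_nonneg hc₀) (hV.tsum_mul_le_one hc₀ hc₁)⟩
  have hrows := hT.hasSum.prod_fiberwise hrow
  have hcols : HasSum (fun k => offDiagSum q i (fun l => V l k) * c k) (∑' p : ℕ × ℕ,
      offDiag q i p.1 * (V p.1 p.2 * c p.2)) := by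
    refine ((Equiv.prodComm ℕ ℕ).hasSum_iff.2 hT.hasSum).prod_fiberwise fun k => ?_
    have := ((summable_offDiag_mul hq (fun l => hV.nonneg l k) (fun l => hV.le_one l k)
      (i := i)).hasSum).mul_right (c k)
    simpa [offDiagSum, mul_assoc] using this
  rwa [offDiagSum, hrows.tsum_eq]

structure IsMeasurableUnitValued (f : ℝ → ℕ → ℝ) : Prop where
  measurable : ∀ k, Measurable fun s => f s k
  nonneg : ∀ s, 0 ≤ f s
  le_one : ∀ s, f s ≤ 1

namespace IsMeasurableUnitValued

variable {q : ℕ → ℕ → ℝ} {f : ℝ → ℕ → ℝ}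

lemma measurable_offDiagSum (hf : IsMeasurableUnitValued f) (hq : IsQMatrix q) (i : ℕ) :
    Measurable fun s => offDiagSum q i (f s) :=
  measurable_of_hasSum (fun k => (hf.measurable k).const_mul _)
    fun s => (summable_offDiag_mul hq (hf.nonneg s) (hf.le_one s)).hasSum

lemma abs_offDiagSum_le (hf : IsMeasurableUnitValued f) (hq : IsQMatrix q) (i : ℕ) (s : ℝ) :
    |offDiagSum q i (f s)| ≤ -q i i :=
  _root_.abs_offDiagSum_le hq (hf.nonneg s) (hf.le_one s)

lemma intervalIntegrable_offDiagSum (hf : IsMeasurableUnitValued f) (hq : IsQMatrix q) (i : ℕ)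
    (u v : ℝ) : IntervalIntegrable (fun s => offDiagSum q i (f s)) volume u v :=
  intervalIntegrable_of_abs_le (hf.measurable_offDiagSum hq i) (hf.abs_offDiagSum_le hq i) u v

end IsMeasurableUnitValued

structure IsMeasurableSubstochastic (V : ℝ → ℕ → ℕ → ℝ) : Prop where
  substochastic : ∀ t, IsSubstochastic (V t)
  measurable : ∀ i j, Measurable fun t => V t i j

namespace IsMeasurableSubstochastic

variable {V : ℝ → ℕ → ℕ → ℝ} {c : ℕ → ℝ}

lemma nonneg (hV : IsMeasurableSubstochastic V) (t : ℝ) (i j : ℕ) : 0 ≤ V t i j :=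
  (hV.substochastic t).nonneg i j

lemma le_one (hV : IsMeasurableSubstochastic V) (t : ℝ) (i j : ℕ) : V t i j ≤ 1 :=
  (hV.substochastic t).le_one i j

lemma zero : IsMeasurableSubstochastic 0 where
  substochastic _ := ⟨fun _ _ => le_rfl, fun _ _ => by simp⟩
  measurable _ _ := measurable_const

lemma comp_add_left (hV : IsMeasurableSubstochastic V) (s : ℝ) :
    IsMeasurableSubstochastic fun v => V (s + v) where
  substochastic v := hV.substochastic (s + v)
  measurable i j := (hV.measurable i j).comp (measurable_const_add s)

lemma column (hV : IsMeasurableSubstochastic V) (j : ℕ) :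
    IsMeasurableUnitValued fun t k => V t k j where
  measurable k := hV.measurable k j
  nonneg t k := hV.nonneg t k j
  le_one t k := hV.le_one t k j

lemma mulVec (hV : IsMeasurableSubstochastic V) (hc₀ : 0 ≤ c) (hc₁ : c ≤ 1) :
    IsMeasurableUnitValued fun t l => ∑' k, V t l k * c k where
  measurable l := measurable_of_hasSum (fun k => (hV.measurable l k).mul_const (c k))
    fun t => ((hV.substochastic t).summable_mul hc₀ hc₁ l).hasSum
  nonneg t l := (hV.substochastic t).tsum_mul_nonneg hc₀ l
  le_one t l := (hV.substochastic t).tsum_mul_le_one hc₀ hc₁ l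

end IsMeasurableSubstochastic

noncomputable def duhamel (a : ℝ) (G : ℝ → ℝ) (t : ℝ) : ℝ :=
  Real.exp (a * t) * ∫ s in (0 : ℝ)..t, Real.exp (-a * s) * G s

section Duhamel

variable {a C : ℝ} {G G' : ℝ → ℝ}

lemma duhamel_eq_integral (a : ℝ) (G : ℝ → ℝ) (t : ℝ) :
    duhamel a G t = ∫ s in (0 : ℝ)..t, Real.exp (a * (t - s)) * G s := by
  rw [duhamel, ← intervalIntegral.integral_const_mul]
  refine intervalIntegral.integral_congr fun s _ => ?_
  rw [← mul_assoc, ← Real.exp_add]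
  ring_nf

lemma duhamel_mul_const (a : ℝ) (G : ℝ → ℝ) (t r : ℝ) :
    duhamel a G t * r = duhamel a (fun s => G s * r) t := by
  rw [duhamel, duhamel, mul_assoc, ← intervalIntegral.integral_mul_const]
  simp only [mul_assoc]

lemma duhamel_nonneg {t : ℝ} (ht : 0 ≤ t) (hG : ∀ s ∈ Set.Icc 0 t, 0 ≤ G s) :
    0 ≤ duhamel a G t :=
  mul_nonneg (Real.exp_nonneg _) (intervalIntegral.integral_nonneg ht fun s hs =>
    mul_nonneg (Real.exp_nonneg _) (hG s hs))

lemma duhamel_mono {t : ℝ} (ht : 0 ≤ t) (hle : ∀ s ∈ Set.Icc 0 t, G s ≤ G' s)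
    (hG : IntervalIntegrable G volume 0 t) (hG' : IntervalIntegrable G' volume 0 t) :
    duhamel a G t ≤ duhamel a G' t :=
  mul_le_mul_of_nonneg_left (intervalIntegral.integral_mono_on ht
    (hG.continuousOn_mul (by fun_prop)) (hG'.continuousOn_mul (by fun_prop))
    fun s hs => mul_le_mul_of_nonneg_left (hle s hs) (Real.exp_nonneg _)) (Real.exp_nonneg _)

lemma duhamel_const_neg (a t : ℝ) : duhamel a (fun _ => -a) t = 1 - Real.exp (a * t) := by
  have hderiv : ∀ s ∈ Set.uIcc (0 : ℝ) t,
      HasDerivAt (fun u => Real.exp (-a * u)) (Real.exp (-a * s) * -a) s := fun s _ => by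
    simpa [mul_comm] using ((hasDerivAt_id s).const_mul (-a)).exp
  rw [duhamel, intervalIntegral.integral_eq_sub_of_hasDerivAt hderiv
    (Continuous.intervalIntegrable (by fun_prop) 0 t), mul_sub, ← Real.exp_add]
  simp

lemma duhamel_le_one_sub_exp {t : ℝ} (ht : 0 ≤ t) (hle : ∀ s ∈ Set.Icc 0 t, G s ≤ -a)
    (hG : IntervalIntegrable G volume 0 t) : duhamel a G t ≤ 1 - Real.exp (a * t) :=
  (duhamel_mono ht hle hG intervalIntegrable_const).trans_eq (duhamel_const_neg a t)

lemma continuous_duhamel (hG : ∀ u v, IntervalIntegrable G volume u v) :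
    Continuous (duhamel a G) :=
  (Real.continuous_exp.comp (continuous_const.mul continuous_id)).mul
    (intervalIntegral.continuous_primitive (fun u v => (hG u v).continuousOn_mul (by fun_prop)) 0)

lemma duhamel_add (hG : ∀ u v, IntervalIntegrable G volume u v) (s t : ℝ) :
    duhamel a G (t + s) =
      Real.exp (a * t) * duhamel a G s + duhamel a (fun v => G (s + v)) t := by
  have hint : ∀ u v, IntervalIntegrable (fun x => Real.exp (-a * x) * G x) volume u v :=
    fun u v => (hG u v).continuousOn_mul (by fun_prop)
  have hshift : ∫ x in s..t + s, Real.exp (-a * x) * G x =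
      Real.exp (-a * s) * ∫ v in (0 : ℝ)..t, Real.exp (-a * v) * G (s + v) := by
    have := intervalIntegral.integral_comp_add_right (a := 0) (b := t)
      (fun x => Real.exp (-a * x) * G x) s
    rw [zero_add] at this
    rw [← this, ← intervalIntegral.integral_const_mul]
    refine intervalIntegral.integral_congr fun v _ => ?_
    rw [← mul_assoc, ← Real.exp_add, add_comm v s]
    ring_nf
  have hexp : Real.exp (a * s) * Real.exp (-a * s) = 1 := by
    rw [← Real.exp_add]; simp
  simp only [duhamel]
  rw [← intervalIntegral.integral_add_adjacent_intervals (hint 0 s) (hint s (t + s)), hshift,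
    mul_add a t s, Real.exp_add]
  linear_combination (Real.exp (a * t) *
    ∫ v in (0 : ℝ)..t, Real.exp (-a * v) * G (s + v)) * hexp

lemma hasSum_duhamel {G : ℕ → ℝ → ℝ} {g : ℝ → ℝ} (hG : ∀ k, Measurable (G k))
    (hG₀ : ∀ k s, 0 ≤ G k s) (hg : ∀ s, HasSum (fun k => G k s) (g s)) (hgC : ∀ s, |g s| ≤ C)
    (a t : ℝ) : HasSum (fun k => duhamel a (G k) t) (duhamel a g t) := by
  refine HasSum.mul_left _ (intervalIntegral.hasSum_integral_of_dominated_convergence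
    (fun k s => Real.exp (-a * s) * G k s) (fun k => (by fun_prop : Measurable
      fun s => Real.exp (-a * s) * G k s).aestronglyMeasurable)
    (fun k => ae_of_all _ fun s _ => (Real.norm_of_nonneg (mul_nonneg (Real.exp_nonneg _)
      (hG₀ k s))).le) (ae_of_all _ fun s _ => ((hg s).mul_left _).summable) ?_
    (ae_of_all _ fun s _ => (hg s).mul_left _))
  simp_rw [tsum_mul_left, fun s => (hg s).tsum_eq]
  exact (intervalIntegrable_of_abs_le (measurable_of_hasSum hG hg) hgC 0 t).continuousOn_mul
    (by fun_prop)

lemma tendsto_duhamel {G : ℕ → ℝ → ℝ} {g : ℝ → ℝ} (hG : ∀ n, Measurable (G n))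
    (hGC : ∀ n s, |G n s| ≤ C) (hlim : ∀ s, Tendsto (fun n => G n s) atTop (𝓝 (g s)))
    (a t : ℝ) : Tendsto (fun n => duhamel a (G n) t) atTop (𝓝 (duhamel a g t)) := by
  refine (intervalIntegral.tendsto_integral_filter_of_dominated_convergence
    (fun s => Real.exp (-a * s) * C) (Eventually.of_forall fun n => (by fun_prop : Measurable
      fun s => Real.exp (-a * s) * G n s).aestronglyMeasurable)
    (Eventually.of_forall fun n => ae_of_all _ fun s _ => ?_)
    (Continuous.intervalIntegrable (by fun_prop) 0 t)
    (ae_of_all _ fun s _ => (hlim s).const_mul _)).const_mul _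
  rw [norm_mul, Real.norm_of_nonneg (Real.exp_nonneg _), Real.norm_eq_abs]
  exact mul_le_mul_of_nonneg_left (hGC n s) (Real.exp_nonneg _)

end Duhamel

/-- The right-hand side of the backward equation, as an operator on `V`. Time is clamped at `0`,
so that everything built from it is bounded and measurable on the whole line. -/
noncomputable def backwardStep (q : ℕ → ℕ → ℝ) (V : ℝ → ℕ → ℕ → ℝ) (t : ℝ) (i j : ℕ) : ℝ :=
  (if i = j then 1 else 0) * Real.exp (q i i * max t 0) +
    duhamel (q i i) (fun s => offDiagSum q i fun k => V s k j) (max t 0)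

section BackwardStep

variable {q q' : ℕ → ℕ → ℝ} {V W : ℝ → ℕ → ℕ → ℝ} {c : ℕ → ℝ}

lemma backwardStep_of_nonneg {t : ℝ} (ht : 0 ≤ t) (i j : ℕ) :
    backwardStep q V t i j = (if i = j then 1 else 0) * Real.exp (q i i * t) +
      duhamel (q i i) (fun s => offDiagSum q i fun k => V s k j) t := by
  rw [backwardStep, max_eq_left ht]

lemma backwardStep_max (t : ℝ) : backwardStep q V (max t 0) = backwardStep q V t := by
  funext i j
  rw [backwardStep, backwardStep, max_eq_left (le_max_right t 0)]

lemma backwardStep_clamp_eq {P : ℝ → ℕ → ℕ → ℝ} {t : ℝ} (ht : 0 ≤ t) (i j : ℕ) :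
    backwardStep q (fun s => P (max s 0)) t i j =
      (if i = j then 1 else 0) * Real.exp (q i i * t) + ∫ s in (0 : ℝ)..t,
        Real.exp (q i i * (t - s)) * (∑' k, if k = i then 0 else q i k * P s k j) := by
  rw [backwardStep_of_nonneg ht, duhamel_eq_integral]
  congr 1
  refine intervalIntegral.integral_congr fun s hs => ?_
  rw [Set.uIcc_of_le ht] at hs
  simp only [max_eq_left hs.1, tsum_ite_eq_offDiagSum]

lemma backwardEq_iff (q : ℕ → ℕ → ℝ) (P : ℝ → ℕ → ℕ → ℝ) :
    BackwardEq q P ↔ ∀ t i j, 0 ≤ t → P t i j = backwardStep q (fun s => P (max s 0)) t i j :=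
  forall₃_congr fun _ i j => imp_congr_right fun ht => by rw [backwardStep_clamp_eq ht]

lemma backwardStep_congr {S : Set ℕ} {i j : ℕ} (hi : i ∈ S) (hagree : ∀ k ∈ S, q i k = q' i k)
    (hV : ∀ s, ∀ k ∉ S, V s k j = 0) (t : ℝ) :
    backwardStep q V t i j = backwardStep q' V t i j := by
  have hsum : ∀ s, (offDiagSum q i fun k => V s k j) = offDiagSum q' i fun k => V s k j :=
    fun s => offDiagSum_congr hagree (hV s)
  simp only [backwardStep, hagree i hi, hsum]

lemma backwardStep_of_row_eq_zero {i j : ℕ} (hrow : ∀ k, q i k = 0) (hij : i ≠ j) (t : ℝ) :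
    backwardStep q V t i j = 0 := by
  simp [backwardStep, duhamel, hij, offDiagSum_of_row_eq_zero hrow]

lemma continuous_backwardStep (hq : IsQMatrix q) (hV : IsMeasurableSubstochastic V) (i j : ℕ) :
    Continuous fun t => backwardStep q V t i j :=
  (continuous_const.mul (by fun_prop)).add ((continuous_duhamel
    ((hV.column j).intervalIntegrable_offDiagSum hq i)).comp (by fun_prop))

/-- Weighted row sums of `backwardStep q V` obey the same recursion; this drives the proof of
Chapman–Kolmogorov for `minimalSolution`. -/
lemma hasSum_backwardStep_mul (hq : IsQMatrix q) (hV : IsMeasurableSubstochastic V)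
    (hc₀ : 0 ≤ c) (hc₁ : c ≤ 1) (t : ℝ) (i : ℕ) :
    HasSum (fun k => backwardStep q V t i k * c k)
      (Real.exp (q i i * max t 0) * c i +
        duhamel (q i i) (fun s => offDiagSum q i fun l => ∑' k, V s l k * c k) (max t 0)) := by
  have hdiag : HasSum (fun k => (if i = k then 1 else 0) * Real.exp (q i i * max t 0) * c k)
      (Real.exp (q i i * max t 0) * c i) := by
    convert hasSum_single (f := fun k => (if i = k then 1 else 0) * Real.exp (q i i * max t 0) *
      c k) i fun k hk => by simp [Ne.symm hk] using 1
    simp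
  have hint := hasSum_duhamel (fun k => ((hV.column k).measurable_offDiagSum hq i).mul_const (c k))
    (fun k s => mul_nonneg (offDiagSum_nonneg hq fun l => hV.nonneg s l k) (hc₀ k))
    (fun s => hasSum_offDiagSum_mul hq (hV.substochastic s) hc₀ hc₁ i)
    ((hV.mulVec hc₀ hc₁).abs_offDiagSum_le hq i) (q i i) (max t 0)
  convert hdiag.add hint using 1
  funext k
  rw [backwardStep, add_mul, duhamel_mul_const]

lemma IsMeasurableSubstochastic.backwardStep (hq : IsQMatrix q)
    (hV : IsMeasurableSubstochastic V) : IsMeasurableSubstochastic (_root_.backwardStep q V) where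
  substochastic t := by
    have hV₁ := hV.mulVec (c := 1) zero_le_one le_rfl
    refine .of_hasSum (fun i j => add_nonneg
      (mul_nonneg (by split_ifs <;> norm_num) (Real.exp_nonneg _))
      (duhamel_nonneg (le_max_right t 0) fun s _ => offDiagSum_nonneg hq fun k => hV.nonneg s k j))
      fun i => ⟨_, ?_, by simpa using hasSum_backwardStep_mul hq hV zero_le_one le_rfl t i⟩
    have := duhamel_le_one_sub_exp (a := q i i) (le_max_right t 0)
      (fun s _ => offDiagSum_le hq (hV₁.nonneg s) (hV₁.le_one s))
      (hV₁.intervalIntegrable_offDiagSum hq i 0 (max t 0))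
    simp only [Pi.one_apply, mul_one] at this ⊢
    linarith
  measurable i j := (continuous_backwardStep hq hV i j).measurable

lemma backwardStep_le_backwardStep (hq : IsQMatrix q) (hV : IsMeasurableSubstochastic V)
    (hW : IsMeasurableSubstochastic W) {j : ℕ} (hle : ∀ s k, V s k j ≤ W s k j) (t : ℝ) (i : ℕ) :
    backwardStep q V t i j ≤ backwardStep q W t i j :=
  add_le_add le_rfl (duhamel_mono (le_max_right t 0)
    (fun s _ => offDiagSum_mono hq ((hV.column j).nonneg s) (hle s) ((hW.column j).le_one s))
    ((hV.column j).intervalIntegrable_offDiagSum hq i _ _)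
    ((hW.column j).intervalIntegrable_offDiagSum hq i _ _))

lemma tendsto_backwardStep (hq : IsQMatrix q) {V : ℕ → ℝ → ℕ → ℕ → ℝ}
    (hV : ∀ n, IsMeasurableSubstochastic (V n)) {j : ℕ}
    (hlim : ∀ s k, Tendsto (fun n => V n s k j) atTop (𝓝 (W s k j))) (t : ℝ) (i : ℕ) :
    Tendsto (fun n => backwardStep q (V n) t i j) atTop (𝓝 (backwardStep q W t i j)) :=
  tendsto_const_nhds.add (tendsto_duhamel
    (fun n => ((hV n).column j).measurable_offDiagSum hq i)
    (fun n => ((hV n).column j).abs_offDiagSum_le hq i)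
    (fun s => tendsto_offDiagSum hq (hlim s) (fun n => ((hV n).column j).nonneg s)
      (fun n => ((hV n).column j).le_one s)) _ _)

lemma backwardStep_add (hq : IsQMatrix q) (hV : IsMeasurableSubstochastic V) {s t : ℝ}
    (hs : 0 ≤ s) (ht : 0 ≤ t) (i j : ℕ) :
    backwardStep q V (t + s) i j = Real.exp (q i i * t) * backwardStep q V s i j +
      duhamel (q i i) (fun v => offDiagSum q i fun k => V (s + v) k j) t := by
  rw [backwardStep_of_nonneg (add_nonneg ht hs), backwardStep_of_nonneg hs,
    duhamel_add ((hV.column j).intervalIntegrable_offDiagSum hq i), mul_add, Real.exp_add]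
  ring

end BackwardStep

noncomputable def fellerIterate (q : ℕ → ℕ → ℝ) (m : ℕ) : ℝ → ℕ → ℕ → ℝ :=
  (backwardStep q)^[m] 0

noncomputable def minimalSolution (q : ℕ → ℕ → ℝ) (t : ℝ) (i j : ℕ) : ℝ :=
  ⨆ m, fellerIterate q m t i j

section FellerIterate

variable {q : ℕ → ℕ → ℝ}

lemma fellerIterate_succ (q : ℕ → ℕ → ℝ) (m : ℕ) :
    fellerIterate q (m + 1) = backwardStep q (fellerIterate q m) :=
  Function.iterate_succ_apply' _ _ _

lemma isMeasurableSubstochastic_fellerIterate (hq : IsQMatrix q) (m : ℕ) :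
    IsMeasurableSubstochastic (fellerIterate q m) := by
  induction m with
  | zero => exact IsMeasurableSubstochastic.zero
  | succ m ih => rw [fellerIterate_succ]; exact ih.backwardStep hq

lemma fellerIterate_le_succ (hq : IsQMatrix q) (m : ℕ) (t : ℝ) (i j : ℕ) :
    fellerIterate q m t i j ≤ fellerIterate q (m + 1) t i j := by
  induction m generalizing t i j with
  | zero => exact (isMeasurableSubstochastic_fellerIterate hq 1).nonneg t i j
  | succ m ih =>
    have h := backwardStep_le_backwardStep hq (isMeasurableSubstochastic_fellerIterate hq m)
      (isMeasurableSubstochastic_fellerIterate hq (m + 1)) (fun s k => ih s k j) t i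
    rwa [← fellerIterate_succ, ← fellerIterate_succ] at h

lemma fellerIterate_max (q : ℕ → ℕ → ℝ) (m : ℕ) (t : ℝ) :
    fellerIterate q m (max t 0) = fellerIterate q m t := by
  cases m with
  | zero => rfl
  | succ m => rw [fellerIterate_succ, backwardStep_max]

lemma fellerIterate_of_row_eq_zero {i j : ℕ} (hrow : ∀ k, q i k = 0) (hij : i ≠ j) (m : ℕ)
    (t : ℝ) : fellerIterate q m t i j = 0 := by
  cases m with
  | zero => rfl
  | succ m => rw [fellerIterate_succ]; exact backwardStep_of_row_eq_zero hrow hij t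

lemma bddAbove_range_fellerIterate (hq : IsQMatrix q) (t : ℝ) (i j : ℕ) :
    BddAbove (Set.range fun m => fellerIterate q m t i j) :=
  ⟨1, by rintro _ ⟨m, rfl⟩; exact (isMeasurableSubstochastic_fellerIterate hq m).le_one t i j⟩

lemma fellerIterate_le_minimalSolution (hq : IsQMatrix q) (m : ℕ) (t : ℝ) (i j : ℕ) :
    fellerIterate q m t i j ≤ minimalSolution q t i j :=
  le_ciSup (bddAbove_range_fellerIterate hq t i j) m

lemma tendsto_fellerIterate (hq : IsQMatrix q) (t : ℝ) (i j : ℕ) :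
    Tendsto (fun m => fellerIterate q m t i j) atTop (𝓝 (minimalSolution q t i j)) :=
  tendsto_atTop_ciSup (monotone_nat_of_le_succ fun m => fellerIterate_le_succ hq m t i j)
    (bddAbove_range_fellerIterate hq t i j)

end FellerIterate

section MinimalSolution

variable {q : ℕ → ℕ → ℝ}

lemma isMeasurableSubstochastic_minimalSolution (hq : IsQMatrix q) :
    IsMeasurableSubstochastic (minimalSolution q) where
  substochastic t :=
    { nonneg i j := fellerIterate_le_minimalSolution hq 0 t i j
      sum_le_one i s := le_of_tendsto' (tendsto_finsetSum s fun j _ =>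
        tendsto_fellerIterate hq t i j) fun m =>
          ((isMeasurableSubstochastic_fellerIterate hq m).substochastic t).sum_le_one i s }
  measurable i j := measurable_of_tendsto_metrizable
    (fun m => (isMeasurableSubstochastic_fellerIterate hq m).measurable i j)
    (tendsto_pi_nhds.2 fun t => tendsto_fellerIterate hq t i j)

lemma minimalSolution_eq_backwardStep (hq : IsQMatrix q) :
    minimalSolution q = backwardStep q (minimalSolution q) := by
  funext t i j
  refine tendsto_nhds_unique ((tendsto_fellerIterate hq t i j).comp (tendsto_add_atTop_nat 1)) ?_
  simp only [Function.comp_def, fellerIterate_succ]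
  exact tendsto_backwardStep hq (isMeasurableSubstochastic_fellerIterate hq)
    (fun s k => tendsto_fellerIterate hq s k j) t i

lemma minimalSolution_add (hq : IsQMatrix q) {s t : ℝ} (hs : 0 ≤ s) (ht : 0 ≤ t) (i j : ℕ) :
    minimalSolution q (t + s) i j = Real.exp (q i i * t) * minimalSolution q s i j +
      duhamel (q i i) (fun v => offDiagSum q i fun k => minimalSolution q (s + v) k j) t := by
  have h := backwardStep_add hq (isMeasurableSubstochastic_minimalSolution hq) hs ht i j
  rwa [← minimalSolution_eq_backwardStep hq] at h

lemma hasSum_minimalSolution_mul (hq : IsQMatrix q) {c : ℕ → ℝ} (hc₀ : 0 ≤ c) (hc₁ : c ≤ 1)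
    {t : ℝ} (ht : 0 ≤ t) (i : ℕ) :
    HasSum (fun k => minimalSolution q t i k * c k) (Real.exp (q i i * t) * c i +
      duhamel (q i i) (fun v => offDiagSum q i fun l => ∑' k, minimalSolution q v l k * c k) t) := by
  have h := hasSum_backwardStep_mul hq (isMeasurableSubstochastic_minimalSolution hq) hc₀ hc₁ t i
  rwa [← minimalSolution_eq_backwardStep hq, max_eq_left ht] at h

lemma backwardEq_minimalSolution (hq : IsQMatrix q) : BackwardEq q (minimalSolution q) := by
  have hclamp : (fun s => minimalSolution q (max s 0)) = minimalSolution q := by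
    funext s
    rw [minimalSolution_eq_backwardStep hq, backwardStep_max]
  rw [backwardEq_iff, hclamp, ← minimalSolution_eq_backwardStep hq]
  exact fun _ _ _ _ => rfl

lemma minimalSolution_zero (hq : IsQMatrix q) (i j : ℕ) :
    minimalSolution q 0 i j = if i = j then 1 else 0 := by
  rw [minimalSolution_eq_backwardStep hq]
  simp [backwardStep, duhamel]

lemma tsum_fellerIterate_mul_le (hq : IsQMatrix q) (m : ℕ) {s t : ℝ} (hs : 0 ≤ s) (ht : 0 ≤ t)
    (i j : ℕ) :
    ∑' k, fellerIterate q m t i k * minimalSolution q s k j ≤ minimalSolution q (t + s) i j := by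
  have hM := isMeasurableSubstochastic_minimalSolution hq
  have hc₀ : 0 ≤ fun k => minimalSolution q s k j := fun k => hM.nonneg s k j
  have hc₁ : (fun k => minimalSolution q s k j) ≤ 1 := fun k => hM.le_one s k j
  induction m generalizing t i with
  | zero => simpa [fellerIterate] using hM.nonneg (t + s) i j
  | succ m ih =>
    have hFm := isMeasurableSubstochastic_fellerIterate hq m
    rw [fellerIterate_succ, (hasSum_backwardStep_mul hq hFm hc₀ hc₁ t i).tsum_eq, max_eq_left ht,
      minimalSolution_add hq hs ht]
    refine add_le_add le_rfl (duhamel_mono ht (fun v hv => offDiagSum_mono hq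
      ((hFm.mulVec hc₀ hc₁).nonneg v) (fun l => ?_) (((hM.comp_add_left s).column j).le_one v))
      ((hFm.mulVec hc₀ hc₁).intervalIntegrable_offDiagSum hq i _ _)
      (((hM.comp_add_left s).column j).intervalIntegrable_offDiagSum hq i _ _))
    simpa only [add_comm v s] using ih hv.1 l

lemma fellerIterate_add_le_tsum (hq : IsQMatrix q) (m : ℕ) {s t : ℝ} (hs : 0 ≤ s) (ht : 0 ≤ t)
    (i j : ℕ) :
    fellerIterate q m (t + s) i j ≤ ∑' k, minimalSolution q t i k * minimalSolution q s k j := by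
  have hM := isMeasurableSubstochastic_minimalSolution hq
  have hc₀ : 0 ≤ fun k => minimalSolution q s k j := fun k => hM.nonneg s k j
  have hc₁ : (fun k => minimalSolution q s k j) ≤ 1 := fun k => hM.le_one s k j
  induction m generalizing t i with
  | zero => exact tsum_nonneg fun k => mul_nonneg (hM.nonneg t i k) (hc₀ k)
  | succ m ih =>
    have hFm := isMeasurableSubstochastic_fellerIterate hq m
    rw [(hasSum_minimalSolution_mul hq hc₀ hc₁ ht i).tsum_eq, fellerIterate_succ,
      backwardStep_add hq hFm hs ht, ← fellerIterate_succ]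
    refine add_le_add (mul_le_mul_of_nonneg_left (fellerIterate_le_minimalSolution hq _ s i j)
      (Real.exp_nonneg _)) (duhamel_mono ht (fun v hv => offDiagSum_mono hq
        (((hFm.comp_add_left s).column j).nonneg v) (fun l => ?_) ((hM.mulVec hc₀ hc₁).le_one v))
      (((hFm.comp_add_left s).column j).intervalIntegrable_offDiagSum hq i _ _)
      ((hM.mulVec hc₀ hc₁).intervalIntegrable_offDiagSum hq i _ _))
    simpa only [add_comm v s] using ih hv.1 l

lemma minimalSolution_chapmanKolmogorov (hq : IsQMatrix q) {s t : ℝ} (ht : 0 ≤ t) (hs : 0 ≤ s)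
    (i j : ℕ) :
    minimalSolution q (t + s) i j = ∑' k, minimalSolution q t i k * minimalSolution q s k j := by
  have hM := isMeasurableSubstochastic_minimalSolution hq
  refine le_antisymm (ciSup_le fun m => fellerIterate_add_le_tsum hq m hs ht i j)
    (le_of_tendsto' (tendsto_tsum_of_dominated_convergence ((hM.substochastic t).summable i)
      (fun k => (tendsto_fellerIterate hq t i k).mul_const _) (Eventually.of_forall fun m k => ?_))
      fun m => tsum_fellerIterate_mul_le hq m hs ht i j)
  have hF := isMeasurableSubstochastic_fellerIterate hq m
  rw [Real.norm_of_nonneg (mul_nonneg (hF.nonneg t i k) (hM.nonneg s k j))]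
  exact (mul_le_of_le_one_right (hF.nonneg t i k) (hM.le_one s k j)).trans
    (fellerIterate_le_minimalSolution hq m t i k)

lemma isTransitionFunction_minimalSolution (hq : IsQMatrix q) :
    IsTransitionFunction (minimalSolution q) :=
  have hM := isMeasurableSubstochastic_minimalSolution hq
  ⟨fun t i j _ => hM.nonneg t i j, fun t i _ => (hM.substochastic t).summable i,
    fun t i _ => (hM.substochastic t).tsum_le_one i, minimalSolution_zero hq,
    fun _ _ i j ht hs => minimalSolution_chapmanKolmogorov hq ht hs i j⟩

end MinimalSolution

namespace IsTransitionFunction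

variable {q : ℕ → ℕ → ℝ} {P : ℝ → ℕ → ℕ → ℝ}

lemma isSubstochastic (hP : IsTransitionFunction P) {t : ℝ} (ht : 0 ≤ t) :
    IsSubstochastic (P t) where
  nonneg i j := hP.1 t i j ht
  sum_le_one i s :=
    ((hP.2.1 t i ht).sum_le_tsum s fun j _ => hP.1 t i j ht).trans (hP.2.2.1 t i ht)

lemma abs_add_sub_le (hP : IsTransitionFunction P) {h t : ℝ} (hh : 0 ≤ h) (ht : 0 ≤ t)
    (i j : ℕ) : |P (h + t) i j - P t i j| ≤ 1 - P h i i := by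
  have hPh := hP.isSubstochastic hh
  have hPt := hP.isSubstochastic ht
  have hle : ∀ k, P h i k * P t k j ≤ P h i k := fun k =>
    mul_le_of_le_one_right (hPh.nonneg i k) (hPt.le_one k j)
  have hsum : Summable fun k => P h i k * P t k j :=
    hPh.summable_mul (fun k => hPt.nonneg k j) (fun k => hPt.le_one k j) i
  have hCK : P (h + t) i j = ∑' k, P h i k * P t k j := hP.2.2.2.2 h t i j hh ht
  have hlower : P h i i * P t i j ≤ P (h + t) i j := by
    rw [hCK]
    exact hsum.le_tsum i fun k _ => mul_nonneg (hPh.nonneg i k) (hPt.nonneg k j)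
  -- the defect `∑ₖ P h i k (1 - P t k j)` is at least its `i`-th term
  have hupper : P h i i - P h i i * P t i j ≤ 1 - P (h + t) i j := by
    have hdefect := ((hPh.summable i).sub hsum).le_tsum i fun k _ => sub_nonneg.2 (hle k)
    rw [(hPh.summable i).tsum_sub hsum, ← hCK] at hdefect
    linarith [hPh.tsum_le_one i]
  rw [abs_le]
  constructor <;> nlinarith [hPh.le_one i i, hPt.le_one i j, hPt.nonneg i j, hPh.nonneg i i]

lemma exp_le_of_backwardEq (hq : IsQMatrix q) (hP : IsTransitionFunction P)
    (hB : BackwardEq q P) {t : ℝ} (ht : 0 ≤ t) (i : ℕ) : Real.exp (q i i * t) ≤ P t i i := by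
  rw [(backwardEq_iff q P).1 hB t i i ht, backwardStep_of_nonneg ht, if_pos rfl, one_mul]
  exact le_add_of_nonneg_right (duhamel_nonneg ht fun s _ =>
    offDiagSum_nonneg hq fun k => hP.1 _ k i (le_max_right s 0))

lemma abs_sub_le_of_backwardEq (hq : IsQMatrix q) (hP : IsTransitionFunction P)
    (hB : BackwardEq q P) {s t : ℝ} (hs : 0 ≤ s) (hst : s ≤ t) (i j : ℕ) :
    |P t i j - P s i j| ≤ -q i i * (t - s) := by
  have h := hP.abs_add_sub_le (sub_nonneg.2 hst) hs i j
  rw [sub_add_cancel] at h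
  linarith [hP.exp_le_of_backwardEq hq hB (sub_nonneg.2 hst) i, Real.add_one_le_exp (q i i * (t - s))]

lemma continuous_clamp (hq : IsQMatrix q) (hP : IsTransitionFunction P) (hB : BackwardEq q P)
    (i j : ℕ) : Continuous fun t => P (max t 0) i j := by
  refine (LipschitzWith.of_dist_le_mul (K := ⟨-q i i, neg_nonneg.2 (hq.diag_nonpos i)⟩)
    fun u v => ?_).continuous
  have hclamp : |P (max u 0) i j - P (max v 0) i j| ≤ -q i i * |max u 0 - max v 0| := by
    rcases le_total (max u 0) (max v 0) with h | h
    · rw [abs_sub_comm, abs_sub_comm (max u 0), abs_of_nonneg (sub_nonneg.2 h)]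
      exact hP.abs_sub_le_of_backwardEq hq hB (le_max_right u 0) h i j
    · rw [abs_of_nonneg (sub_nonneg.2 h)]
      exact hP.abs_sub_le_of_backwardEq hq hB (le_max_right v 0) h i j
  rw [Real.dist_eq, Real.dist_eq]
  exact hclamp.trans
    (mul_le_mul_of_nonneg_left (abs_max_sub_max_le_abs u v 0) (neg_nonneg.2 (hq.diag_nonpos i)))

lemma isMeasurableSubstochastic_clamp (hq : IsQMatrix q) (hP : IsTransitionFunction P)
    (hB : BackwardEq q P) : IsMeasurableSubstochastic fun t => P (max t 0) where
  substochastic t := hP.isSubstochastic (le_max_right t 0)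
  measurable i j := (hP.continuous_clamp hq hB i j).measurable

end IsTransitionFunction

section Comparison

variable {q q₁ q₂ : ℕ → ℕ → ℝ} {P : ℝ → ℕ → ℕ → ℝ} {S : Set ℕ}

lemma fellerIterate_le_of_backwardEq (hq₁ : IsQMatrix q₁) (hq₂ : IsQMatrix q₂)
    (hagree : ∀ i ∈ S, ∀ k ∈ S, q₁ i k = q₂ i k) (hzero : ∀ i ∉ S, ∀ j, q₁ i j = 0)
    (hP : IsTransitionFunction P) (hB : BackwardEq q₂ P) (m : ℕ) {t : ℝ} (ht : 0 ≤ t)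
    {i j : ℕ} (hi : i ∈ S) (hj : j ∈ S) : fellerIterate q₁ m t i j ≤ P t i j := by
  have hPc := hP.isMeasurableSubstochastic_clamp hq₂ hB
  have hcol : ∀ m s, ∀ k ∉ S, fellerIterate q₁ m s k j = 0 := fun m s k hk =>
    fellerIterate_of_row_eq_zero (hzero k hk) (fun h => hk (h ▸ hj)) m s
  induction m generalizing t i with
  | zero => exact hP.1 t i j ht
  | succ m ih =>
    rw [fellerIterate_succ, backwardStep_congr hi (hagree i hi) (hcol m),
      (backwardEq_iff q₂ P).1 hB t i j ht]
    refine backwardStep_le_backwardStep hq₂ (isMeasurableSubstochastic_fellerIterate hq₁ m) hPc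
      (fun s k => ?_) t i
    by_cases hk : k ∈ S
    · rw [← fellerIterate_max]
      exact ih (le_max_right s 0) hk
    · rw [hcol m s k hk]
      exact hPc.nonneg s k j

lemma minimalSolution_le_of_backwardEq (hq₁ : IsQMatrix q₁) (hq₂ : IsQMatrix q₂)
    (hagree : ∀ i ∈ S, ∀ k ∈ S, q₁ i k = q₂ i k) (hzero : ∀ i ∉ S, ∀ j, q₁ i j = 0)
    (hP : IsTransitionFunction P) (hB : BackwardEq q₂ P) {t : ℝ} (ht : 0 ≤ t) {i j : ℕ}
    (hi : i ∈ S) (hj : j ∈ S) : minimalSolution q₁ t i j ≤ P t i j :=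
  ciSup_le fun m => fellerIterate_le_of_backwardEq hq₁ hq₂ hagree hzero hP hB m ht hi hj

lemma isMinimalQProcess_minimalSolution (hq : IsQMatrix q) :
    IsMinimalQProcess q (minimalSolution q) :=
  ⟨isTransitionFunction_minimalSolution hq, backwardEq_minimalSolution hq,
    fun _ hP hB _ _ _ ht => minimalSolution_le_of_backwardEq (S := Set.univ) hq hq
      (fun _ _ _ _ => rfl) (fun i hi => absurd (Set.mem_univ i) hi) hP hB ht
      (Set.mem_univ _) (Set.mem_univ _)⟩

lemma IsMinimalQProcess.eq_minimalSolution (hq : IsQMatrix q) (hP : IsMinimalQProcess q P)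
    {t : ℝ} (ht : 0 ≤ t) (i j : ℕ) : P t i j = minimalSolution q t i j :=
  le_antisymm (hP.2.2 _ (isTransitionFunction_minimalSolution hq) (backwardEq_minimalSolution hq)
      t i j ht)
    ((isMinimalQProcess_minimalSolution hq).2.2 P hP.1 hP.2.1 t i j ht)

end Comparison

lemma tendsto_fellerIterate_of_eventually_agree {q : ℕ → ℕ → ℝ} (hq : IsQMatrix q)
    {E : ℕ → Set ℕ} {qn : ℕ → ℕ → ℕ → ℝ} (hqn : ∀ n, IsQMatrix (qn n))
    (hE : ∀ k, ∀ᶠ n in atTop, k ∈ E n) (hqnE : ∀ n, ∀ i ∈ E n, ∀ j ∈ E n, qn n i j = q i j)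
    (hqn0 : ∀ n, ∀ i, i ∉ E n → ∀ j, qn n i j = 0) (m : ℕ) (t : ℝ) (i j : ℕ) :
    Tendsto (fun n => fellerIterate (qn n) m t i j) atTop (𝓝 (fellerIterate q m t i j)) := by
  induction m generalizing t i j with
  | zero => exact tendsto_const_nhds
  | succ m ih =>
    rw [fellerIterate_succ q]
    refine (tendsto_backwardStep hq (fun n => isMeasurableSubstochastic_fellerIterate (hqn n) m)
      (fun s k => ih s k j) t i).congr' ?_
    filter_upwards [hE i, hE j] with n hi hj
    rw [fellerIterate_succ, backwardStep_congr hi (hqnE n i hi) fun s k hk =>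
      fellerIterate_of_row_eq_zero (hqn0 n k hk) (fun h => hk (h ▸ hj)) m s]

lemma tendsto_of_approx_below {α ι κ : Type*} [LinearOrder α] [TopologicalSpace α]
    [OrderTopology α] {l : Filter ι} {l' : Filter κ} [l'.NeBot] {x : ι → α} {y : κ → ι → α}
    {Y : κ → α} {b : α} (hyx : ∀ m, ∀ᶠ n in l, y m n ≤ x n) (hxb : ∀ᶠ n in l, x n ≤ b)
    (hy : ∀ m, Tendsto (y m) l (𝓝 (Y m))) (hY : Tendsto Y l' (𝓝 b)) : Tendsto x l (𝓝 b) := by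
  refine tendsto_order.2 ⟨fun b' hb' => ?_, fun b' hb' => hxb.mono fun n h => h.trans_lt hb'⟩
  obtain ⟨m, hm⟩ := ((tendsto_order.1 hY).1 b' hb').exists
  exact ((tendsto_order.1 (hy m)).1 b' hm).mp ((hyx m).mono fun n h h' => h'.trans_le h)

/-- corrected form of Anderson's Proposition 2.2.14: for Q-matrices
`qn n` agreeing with `q` on `E n × E n` and having zero rows outside `E n`, the
minimal processes satisfy `Pn n t i j ≤ Pn (n+1) t i j` for `i, j ∈ E n`, and
`Pn n t i j → P t i j` for all `i`, `j`, `t ≥ 0`. -/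
theorem statement7 (q : ℕ → ℕ → ℝ) (hq : IsQMatrix q)
    (E : ℕ → Set ℕ) (hEmono : Monotone E) (hEunion : (⋃ n, E n) = Set.univ)
    (qn : ℕ → ℕ → ℕ → ℝ) (hqnQ : ∀ n, IsQMatrix (qn n))
    (hqnE : ∀ n, ∀ i ∈ E n, ∀ j ∈ E n, qn n i j = q i j)
    (hqn0 : ∀ n, ∀ i, i ∉ E n → ∀ j, qn n i j = 0)
    (Pn : ℕ → ℝ → ℕ → ℕ → ℝ) (P : ℝ → ℕ → ℕ → ℝ)
    (hPn : ∀ n, IsMinimalQProcess (qn n) (Pn n))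
    (hP : IsMinimalQProcess q P) :
    (∀ n, ∀ t : ℝ, 0 ≤ t → ∀ i ∈ E n, ∀ j ∈ E n, Pn n t i j ≤ Pn (n + 1) t i j) ∧
    (∀ t : ℝ, 0 ≤ t → ∀ i j : ℕ,
      Filter.Tendsto (fun n => Pn n t i j) Filter.atTop (nhds (P t i j))) := by
  have hE : ∀ k, ∀ᶠ n in atTop, k ∈ E n := fun k => by
    obtain ⟨n₀, hn₀⟩ := Set.mem_iUnion.1 (hEunion ▸ Set.mem_univ k)
    exact eventually_atTop.2 ⟨n₀, fun n hn => hEmono hn hn₀⟩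
  have hPn_eq : ∀ n {t : ℝ}, 0 ≤ t → ∀ i j, Pn n t i j = minimalSolution (qn n) t i j :=
    fun n _ ht => (hPn n).eq_minimalSolution (hqnQ n) ht
  refine ⟨fun n t ht i hi j hj => ?_, fun t ht i j => ?_⟩
  · have hagree : ∀ a ∈ E n, ∀ b ∈ E n, qn n a b = qn (n + 1) a b := fun a ha b hb => by
      rw [hqnE n a ha b hb, hqnE (n + 1) a (hEmono n.le_succ ha) b (hEmono n.le_succ hb)]
    rw [hPn_eq n ht]
    exact minimalSolution_le_of_backwardEq (hqnQ n) (hqnQ (n + 1)) hagree (hqn0 n)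
      (hPn (n + 1)).1 (hPn (n + 1)).2.1 ht hi hj
  · refine tendsto_of_approx_below (fun m => Eventually.of_forall fun n => ?_) ?_
      (tendsto_fellerIterate_of_eventually_agree hq hqnQ hE hqnE hqn0 · t i j)
      ((hP.eq_minimalSolution hq ht i j).symm ▸ tendsto_fellerIterate hq t i j)
    · rw [hPn_eq n ht]
      exact fellerIterate_le_minimalSolution (hqnQ n) m t i j
    · filter_upwards [hE i, hE j] with n hi hj
      rw [hPn_eq n ht]
      exact minimalSolution_le_of_backwardEq (hqnQ n) hq (hqnE n) (hqn0 n) hP.1 hP.2.1 ht hi hj
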